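/- For fixed t > 0 and σ > 0, the map λ ↦ p(λ; t, σ) is continuous and strictly decreasing on (0, ∞), with p(λ; t, σ) → +∞ as λ → 0⁺ and p(λ; t, σ) → σ(e^{2t} − 1) as λ → +∞. Consequently, given a finite nonempty set S of links with flows t_l > 0 and noise powers σ_l > 0, and an energy budget E with E > ∑_{l∈S} σ_l(e^{2 t_l} − 1), there exists a unique λ* > 0 such that ∑_{l∈S} p(λ*; t_l, σ_l) = E. -/

import Mathlib

/-!
The left-hand side `F(p)` of the stationarity equation is positive and strictly decreasing on
`p > σ(e^{2t} − 1)`, because both factors `(½ ln(1 + p/σ) − t)²` and `1 + p/σ` of its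
denominator are positive and increasing there. A solution `P` of `F (P λ) = λ` is therefore the
inverse of `F`: it is strictly decreasing, maps `(0, ∞)` onto `(σ(e^{2t} − 1), ∞)` (hence is
continuous, being monotone with an interval as image), and its limits at `0⁺` and `∞` are read
off from the order alone. The total power `∑ P_l` is then continuous and strictly decreasing
from `+∞` down to `∑ σ_l(e^{2t_l} − 1) < E`, so the intermediate value theorem gives exactly
one `λ*`.
-/

open BigOperators

/-- `p` solves the stationarity equation
`(t/(2σ)) · ((1/2)·ln(1 + p/σ) − t)^{−2} · (1 + p/σ)^{−1} = λ` on the domain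
`p > σ(e^{2t} − 1)`; this characterizes the unique solution `p(λ; t, σ)`. -/
def IsStatSol (t σ lam p : ℝ) : Prop :=
  σ * (Real.exp (2 * t) - 1) < p ∧
    t / (2 * σ) / ((1 / 2) * Real.log (1 + p / σ) - t) ^ 2 / (1 + p / σ) = lam

open Set Filter Topology

section RightInverse

variable {F P : ℝ → ℝ} {a c : ℝ}

lemma StrictAntiOn.strictAntiOn_of_rightInvOn (hF : StrictAntiOn F (Ioi a))
    (hPa : MapsTo P (Ioi c) (Ioi a)) (hPF : RightInvOn P F (Ioi c)) :
    StrictAntiOn P (Ioi c) := fun x hx y hy hxy => by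
  rwa [← hF.lt_iff_gt (hPa hx) (hPa hy), hPF hx, hPF hy]

lemma StrictAntiOn.Ioi_subset_image_of_rightInvOn (hF : StrictAntiOn F (Ioi a))
    (hFc : MapsTo F (Ioi a) (Ioi c)) (hPa : MapsTo P (Ioi c) (Ioi a))
    (hPF : RightInvOn P F (Ioi c)) : Ioi a ⊆ P '' Ioi c := fun p hp =>
  ⟨F p, hFc hp, hF.injOn (hPa (hFc hp)) hp (hPF (hFc hp))⟩

lemma StrictAntiOn.continuousOn_of_rightInvOn (hF : StrictAntiOn F (Ioi a))
    (hFc : MapsTo F (Ioi a) (Ioi c)) (hPa : MapsTo P (Ioi c) (Ioi a))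
    (hPF : RightInvOn P F (Ioi c)) : ContinuousOn P (Ioi c) := by
  intro x hx
  have hmono : StrictMonoOn (-P) (Ioi c) := fun y hy z hz hyz =>
    neg_lt_neg (hF.strictAntiOn_of_rightInvOn hPa hPF hy hz hyz)
  have himage : Iio (-a) ⊆ (-P) '' Ioi c := fun q hq => by
    obtain ⟨y, hy, hPy⟩ := hF.Ioi_subset_image_of_rightInvOn hFc hPa hPF
      (show a < -q by linarith [mem_Iio.1 hq])
    exact ⟨y, hy, by simp [hPy]⟩
  have hneg : ContinuousAt (-P) x :=
    hmono.continuousAt_of_image_mem_nhds (Ioi_mem_nhds hx) <|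
      mem_of_superset (Iio_mem_nhds (neg_lt_neg (hPa hx))) himage
  simpa only [neg_neg] using hneg.neg.continuousWithinAt

lemma StrictAntiOn.tendsto_atTop_of_rightInvOn (hF : StrictAntiOn F (Ioi a))
    (hFc : MapsTo F (Ioi a) (Ioi c)) (hPa : MapsTo P (Ioi c) (Ioi a))
    (hPF : RightInvOn P F (Ioi c)) : Tendsto P (𝓝[>] c) atTop := by
  refine tendsto_atTop.2 fun b => ?_
  have hM : max b (a + 1) ∈ Ioi a := lt_max_of_lt_right (lt_add_one a)
  filter_upwards [Ioo_mem_nhdsGT (hFc hM)] with x hx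
  have hlt : max b (a + 1) < P x := by
    rw [← hF.lt_iff_gt (hPa hx.1) hM, hPF hx.1]
    exact hx.2
  exact (le_max_left _ _).trans hlt.le

lemma StrictAntiOn.tendsto_nhds_of_rightInvOn (hF : StrictAntiOn F (Ioi a))
    (hPa : MapsTo P (Ioi c) (Ioi a)) (hPF : RightInvOn P F (Ioi c)) :
    Tendsto P atTop (𝓝 a) := by
  refine tendsto_order.2 ⟨fun b hb => ?_, fun b hb => ?_⟩
  · filter_upwards [eventually_gt_atTop c] with x hx
    exact hb.trans (hPa hx)
  · filter_upwards [eventually_gt_atTop c, eventually_gt_atTop (F b)] with x hx hxb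
    rwa [← hF.lt_iff_gt hb (hPa hx), hPF hx]

end RightInverse

lemma existsUnique_eq_of_strictAntiOn_Ioi {G : ℝ → ℝ} {c L E : ℝ}
    (hcont : ContinuousOn G (Ioi c)) (hanti : StrictAntiOn G (Ioi c))
    (hc : Tendsto G (𝓝[>] c) atTop) (hL : Tendsto G atTop (𝓝 L)) (hE : L < E) :
    ∃! x, c < x ∧ G x = E := by
  obtain ⟨x, hx, hGx⟩ := isPreconnected_Ioi.intermediate_value_Ioi
    (by simpa using Ioi_mem_atTop c) (le_principal_iff.2 self_mem_nhdsWithin) hcont hL hc hE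
  exact ⟨x, ⟨hx, hGx⟩, fun y hy => hanti.injOn hy.1 hx (hy.2.trans hGx.symm)⟩

lemma Filter.tendsto_finsetSum_atTop {ι α β : Type*} [AddCommMonoid β] [Preorder β]
    [IsOrderedAddMonoid β] {l : Filter α} {s : Finset ι} (hs : s.Nonempty) {f : ι → α → β}
    (hf : ∀ i ∈ s, Tendsto (f i) l atTop) : Tendsto (fun x => ∑ i ∈ s, f i x) l atTop := by
  induction hs using Finset.Nonempty.cons_induction with
  | singleton i => simpa using hf i (Finset.mem_singleton_self i)
  | cons i s _ _ ih =>
    rw [Finset.forall_mem_cons] at hf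
    simpa only [Finset.sum_cons] using hf.1.atTop_add_atTop (ih hf.2)

noncomputable def statLhs (t σ p : ℝ) : ℝ :=
  t / (2 * σ) / ((1 / 2) * Real.log (1 + p / σ) - t) ^ 2 / (1 + p / σ)

section StationarityEquation

variable {t σ p : ℝ}

lemma exp_two_mul_lt_one_add_div (hσ : 0 < σ) (hp : σ * (Real.exp (2 * t) - 1) < p) :
    Real.exp (2 * t) < 1 + p / σ := by
  have : Real.exp (2 * t) - 1 < p / σ := by rwa [lt_div_iff₀' hσ]
  linarith

lemma half_log_one_add_div_sub_pos (hσ : 0 < σ) (hp : σ * (Real.exp (2 * t) - 1) < p) :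
    0 < (1 / 2) * Real.log (1 + p / σ) - t := by
  have hx := exp_two_mul_lt_one_add_div hσ hp
  have := (Real.lt_log_iff_exp_lt ((Real.exp_pos _).trans hx)).2 hx
  linarith

lemma mapsTo_statLhs (ht : 0 < t) (hσ : 0 < σ) :
    MapsTo (statLhs t σ) (Ioi (σ * (Real.exp (2 * t) - 1))) (Ioi 0) := fun p hp => by
  have hu := half_log_one_add_div_sub_pos hσ hp
  have hx := (Real.exp_pos _).trans (exp_two_mul_lt_one_add_div hσ hp)
  exact div_pos (div_pos (by positivity) (by positivity)) hx

lemma strictAntiOn_statLhs (ht : 0 < t) (hσ : 0 < σ) :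
    StrictAntiOn (statLhs t σ) (Ioi (σ * (Real.exp (2 * t) - 1))) := by
  intro p hp q hq hpq
  have hu := half_log_one_add_div_sub_pos hσ hp
  have hx := (Real.exp_pos _).trans (exp_two_mul_lt_one_add_div hσ hp)
  simp only [statLhs, div_div]
  gcongr

end StationarityEquation

lemma continuousOn_strictAntiOn_tendsto_of_isStatSol {t σ : ℝ} (ht : 0 < t) (hσ : 0 < σ)
    {P : ℝ → ℝ} (hP : ∀ lam : ℝ, 0 < lam → IsStatSol t σ lam (P lam)) :
    ContinuousOn P (Ioi 0) ∧ StrictAntiOn P (Ioi 0) ∧ Tendsto P (𝓝[>] 0) atTop ∧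
      Tendsto P atTop (𝓝 (σ * (Real.exp (2 * t) - 1))) := by
  have hF := strictAntiOn_statLhs ht hσ
  have hFc := mapsTo_statLhs ht hσ
  have hPa : MapsTo P (Ioi 0) (Ioi (σ * (Real.exp (2 * t) - 1))) := fun lam h => (hP lam h).1
  have hPF : RightInvOn P (statLhs t σ) (Ioi 0) := fun lam h => (hP lam h).2
  exact ⟨hF.continuousOn_of_rightInvOn hFc hPa hPF, hF.strictAntiOn_of_rightInvOn hPa hPF,
    hF.tendsto_atTop_of_rightInvOn hFc hPa hPF, hF.tendsto_nhds_of_rightInvOn hPa hPF⟩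

/-- For fixed `t > 0` and `σ > 0`, the map `λ ↦ p(λ; t, σ)` (given by any
selection `P` of solutions of the stationarity equation) is continuous and strictly
decreasing on `(0, ∞)`, with `p(λ) → +∞` as `λ → 0⁺` and `p(λ) → σ(e^{2t} − 1)` as
`λ → +∞`. Consequently, for a finite nonempty set `S` of links with flows `t_l > 0`,
noise powers `σ_l > 0`, and an energy budget `E > ∑_l σ_l(e^{2 t_l} − 1)`, there
exists a unique `λ* > 0` with `∑_l p(λ*; t_l, σ_l) = E`. -/
theorem statSol_in_lambda_and_waterfilling :
    (∀ t σ : ℝ, 0 < t → 0 < σ → ∀ P : ℝ → ℝ,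
      (∀ lam : ℝ, 0 < lam → IsStatSol t σ lam (P lam)) →
      ContinuousOn P (Set.Ioi 0) ∧
      StrictAntiOn P (Set.Ioi 0) ∧
      Filter.Tendsto P (nhdsWithin 0 (Set.Ioi 0)) Filter.atTop ∧
      Filter.Tendsto P Filter.atTop (nhds (σ * (Real.exp (2 * t) - 1)))) ∧
    (∀ (S : Type) [Fintype S] [Nonempty S] (t σ : S → ℝ) (E : ℝ),
      (∀ l, 0 < t l) → (∀ l, 0 < σ l) →
      (∑ l, σ l * (Real.exp (2 * t l) - 1)) < E →
      ∀ P : S → ℝ → ℝ,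
        (∀ l (lam : ℝ), 0 < lam → IsStatSol (t l) (σ l) lam (P l lam)) →
        ∃! lam : ℝ, 0 < lam ∧ (∑ l, P l lam) = E) := by
  refine ⟨fun t σ ht hσ P hP => continuousOn_strictAntiOn_tendsto_of_isStatSol ht hσ hP,
    fun S _ _ t σ E ht hσ hE P hP => ?_⟩
  have h l := continuousOn_strictAntiOn_tendsto_of_isStatSol (ht l) (hσ l) (hP l)
  have hanti : StrictAntiOn (fun lam => ∑ l, P l lam) (Ioi 0) := fun x hx y hy hxy =>
    Finset.sum_lt_sum_of_nonempty Finset.univ_nonempty fun l _ => (h l).2.1 hx hy hxy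
  exact existsUnique_eq_of_strictAntiOn_Ioi (continuousOn_finsetSum _ fun l _ => (h l).1) hanti
    (tendsto_finsetSum_atTop Finset.univ_nonempty fun l _ => (h l).2.2.1)
    (tendsto_finsetSum _ fun l _ => (h l).2.2.2) hE
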